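/- arXiv:2102.09587 — 4 statements merged into one kernel-verified Lean document; each statement's English description precedes it below -/
import Mathlib

section
/- Let Δ and Δ_p be real symmetric n×n matrices whose ℓ2 operator norms are at most 1 (equivalently, all eigenvalues lie in [−1,1]), and let θ_0, …, θ_K be real coefficients. Then ‖∑_{k=0}^K θ_k Δ^k − ∑_{k=0}^K θ_k Δ_p^k‖₂ ≤ (∑_{k=1}^K k·|θ_k|) · ‖Δ − Δ_p‖₂, where ‖·‖₂ denotes the ℓ2 operator norm on matrices. (Polynomial spectral graph filters are linearly stable with respect to any graph shift operator with spectrum in [−1,1], with stability constant C = ∑_{k=1}^K k|θ_k|.) -/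
open scoped Matrix.Norms.L2Operator

/-! Telescoping `a ^ (k + 1) - b ^ (k + 1) = a * (a ^ k - b ^ k) + (a - b) * b ^ k` and
submultiplicativity of the norm show that `x ↦ x ^ k` is `k`-Lipschitz on the unit
ball of any normed ring; summing over the coefficients gives the constant `∑ k * |θ k|`. -/

section NormedRing

variable {R : Type*} [NormedRing R]

/-- Stated with a factor `x` because `‖b ^ 0‖ = ‖1‖` need not be at most `1` in a normed ring. -/
theorem norm_mul_pow_le_of_norm_le_one {b : R} (hb : ‖b‖ ≤ 1) (x : R) (k : ℕ) :
    ‖x * b ^ k‖ ≤ ‖x‖ := by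
  induction k with
  | zero => simp
  | succ k ih =>
    calc ‖x * b ^ (k + 1)‖ = ‖x * b ^ k * b‖ := by rw [pow_succ, mul_assoc]
      _ ≤ ‖x * b ^ k‖ * ‖b‖ := norm_mul_le _ _
      _ ≤ ‖x‖ * 1 := mul_le_mul ih hb (norm_nonneg _) (norm_nonneg _)
      _ = ‖x‖ := mul_one _

theorem norm_pow_sub_pow_le_of_norm_le_one {a b : R} (ha : ‖a‖ ≤ 1) (hb : ‖b‖ ≤ 1) (k : ℕ) :
    ‖a ^ k - b ^ k‖ ≤ k * ‖a - b‖ := by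
  induction k with
  | zero => simp
  | succ k ih =>
    have telescope : a ^ (k + 1) - b ^ (k + 1) = a * (a ^ k - b ^ k) + (a - b) * b ^ k := by
      rw [pow_succ', pow_succ']
      noncomm_ring
    calc ‖a ^ (k + 1) - b ^ (k + 1)‖ ≤ ‖a * (a ^ k - b ^ k)‖ + ‖(a - b) * b ^ k‖ :=
          telescope ▸ norm_add_le _ _
      _ ≤ 1 * (k * ‖a - b‖) + ‖a - b‖ := by
          gcongr
          · exact (norm_mul_le _ _).trans (mul_le_mul ha ih (norm_nonneg _) zero_le_one)
          · exact norm_mul_pow_le_of_norm_le_one hb _ _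
      _ = (k + 1 : ℕ) * ‖a - b‖ := by push_cast; ring

variable [NormedSpace ℝ R]

theorem norm_sum_smul_pow_sub_sum_smul_pow_le {a b : R} (ha : ‖a‖ ≤ 1) (hb : ‖b‖ ≤ 1)
    (s : Finset ℕ) (θ : ℕ → ℝ) :
    ‖∑ k ∈ s, θ k • a ^ k - ∑ k ∈ s, θ k • b ^ k‖ ≤ (∑ k ∈ s, k * |θ k|) * ‖a - b‖ := by
  rw [← Finset.sum_sub_distrib, Finset.sum_mul]
  refine (norm_sum_le _ _).trans (Finset.sum_le_sum fun k _ => ?_)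
  rw [← smul_sub, norm_smul, Real.norm_eq_abs, mul_comm (k : ℝ), mul_assoc]
  exact mul_le_mul_of_nonneg_left (norm_pow_sub_pow_le_of_norm_le_one ha hb k) (abs_nonneg _)

end NormedRing

theorem polynomial_filter_linearly_stable_general {n : ℕ}
    (Δ Δp : Matrix (Fin n) (Fin n) ℝ)
    (hΔ : ‖Δ‖ ≤ 1) (hΔp : ‖Δp‖ ≤ 1)
    (K : ℕ) (θ : ℕ → ℝ) :
    ‖(∑ k ∈ Finset.range (K + 1), θ k • Δ ^ k) -
        ∑ k ∈ Finset.range (K + 1), θ k • Δp ^ k‖ ≤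
      (∑ k ∈ Finset.Icc 1 K, (k : ℝ) * |θ k|) * ‖Δ - Δp‖ := by
  have constant_eq : ∑ k ∈ Finset.range (K + 1), (k : ℝ) * |θ k| =
      ∑ k ∈ Finset.Icc 1 K, (k : ℝ) * |θ k| := by
    rw [Finset.range_eq_Ico, Finset.sum_eq_sum_Ico_succ_bot (Nat.succ_pos K)]
    simp only [Nat.cast_zero, zero_mul, zero_add, Nat.succ_eq_add_one,
      Finset.Ico_add_one_right_eq_Icc]
  exact constant_eq ▸ norm_sum_smul_pow_sub_sum_smul_pow_le hΔ hΔp _ θ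

/-- **Linear stability of polynomial spectral graph filters.**
If `Δ` and `Δp` are real symmetric `n × n` matrices whose ℓ2 operator norms are
at most `1`, then for any polynomial filter `g(λ) = ∑_{k=0}^K θ_k λ^k` we have
`‖g(Δ) - g(Δp)‖₂ ≤ (∑_{k=1}^K k * |θ_k|) * ‖Δ - Δp‖₂`. -/
theorem polynomial_filter_linearly_stable {n : ℕ}
    (Δ Δp : Matrix (Fin n) (Fin n) ℝ)
    (hΔsymm : Δ.IsSymm) (hΔpsymm : Δp.IsSymm)
    (hΔ : ‖Δ‖ ≤ 1) (hΔp : ‖Δp‖ ≤ 1)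
    (K : ℕ) (θ : ℕ → ℝ) :
    ‖(∑ k ∈ Finset.range (K + 1), θ k • Δ ^ k) -
        ∑ k ∈ Finset.range (K + 1), θ k • Δp ^ k‖ ≤
      (∑ k ∈ Finset.Icc 1 K, (k : ℝ) * |θ k|) * ‖Δ - Δp‖ :=
  polynomial_filter_linearly_stable_general Δ Δp hΔ hΔp K θ
end

section
/- Let L and L_p be real symmetric positive semidefinite n×n matrices and let α > 0. Then the matrices I + αL and I + αL_p are invertible and ‖(I + αL)^{-1} − (I + αL_p)^{-1}‖₂ ≤ α · ‖L − L_p‖₂, where ‖·‖₂ is the ℓ2 operator norm. (The low-pass filter g(λ) = (1+αλ)^{-1} is linearly stable with respect to the normalised Laplacian matrix, with stability constant C = α.) -/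
/-!
Positivity of `L` gives `‖x‖² ≤ re ⟪(1 + αL) x, x⟫ ≤ ‖(1 + αL) x‖ ‖x‖`, so `1 + αL` is
invertible with `‖(1 + αL)⁻¹‖₂ ≤ 1`. The resolvent identity
`A⁻¹ - B⁻¹ = A⁻¹ (B - A) B⁻¹` then bounds the difference of the two filters by
`‖(1 + αL) - (1 + αLp)‖₂ = α ‖L - Lp‖₂`.
-/

open scoped Matrix.Norms.L2Operator

open scoped InnerProductSpace in
theorem LinearMap.IsPositive.norm_le_norm_add_self {𝕜 E : Type*} [RCLike 𝕜]
    [NormedAddCommGroup E] [InnerProductSpace 𝕜 E] {T : E →ₗ[𝕜] E} (hT : T.IsPositive) (x : E) :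
    ‖x‖ ≤ ‖x + T x‖ := by
  have h : ‖x‖ * ‖x‖ ≤ ‖x + T x‖ * ‖x‖ :=
    calc ‖x‖ * ‖x‖ = RCLike.re ⟪x, x⟫_𝕜 := by rw [inner_self_eq_norm_mul_norm]
      _ ≤ RCLike.re ⟪x + T x, x⟫_𝕜 := by
        rw [inner_add_left, map_add]
        linarith [hT.re_inner_nonneg_left x]
      _ ≤ ‖x + T x‖ * ‖x‖ := re_inner_le_norm _ _
  rcases (norm_nonneg x).eq_or_lt with hx | hx
  · rw [← hx]; exact norm_nonneg _
  · exact le_of_mul_le_mul_right h hx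

theorem Ring.norm_inverse_sub_inverse_le {R : Type*} [NormedRing R] {a b : R}
    (h : IsUnit a ↔ IsUnit b) :
    ‖Ring.inverse a - Ring.inverse b‖ ≤ ‖Ring.inverse a‖ * ‖a - b‖ * ‖Ring.inverse b‖ := by
  rw [Ring.inverse_sub_inverse h, norm_sub_rev a b]
  exact norm_mul₃_le

namespace Matrix

open scoped ComplexOrder

variable {𝕜 ι : Type*} [RCLike 𝕜] [Fintype ι] [DecidableEq ι]

theorem PosSemidef.isUnit_one_add {A : Matrix ι ι 𝕜} (hA : A.PosSemidef) : IsUnit (1 + A) :=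
  (PosDef.one.add_posSemidef hA).isUnit

theorem PosSemidef.l2_opNorm_inv_one_add_le_one {A : Matrix ι ι 𝕜} (hA : A.PosSemidef) :
    ‖(1 + A)⁻¹‖ ≤ 1 := by
  rw [l2_opNorm_def]
  refine ContinuousLinearMap.opNorm_le_bound _ zero_le_one fun x => ?_
  set y := toEuclideanCLM (𝕜 := 𝕜) (1 + A)⁻¹ x
  have hy : y + A.toEuclideanLin y = x := by
    have hdet := (isUnit_iff_isUnit_det _).mp hA.isUnit_one_add
    have h1 : toEuclideanCLM (𝕜 := 𝕜) (1 + A) y = x := by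
      rw [← mul_apply_eq_comp, ← map_mul, mul_nonsing_inv _ hdet, map_one, one_apply_eq_self]
    rw [← h1, map_add, map_one]
    rfl
  calc ‖y‖ ≤ ‖y + A.toEuclideanLin y‖ :=
        (isPositive_toEuclideanLin_iff.mpr hA).norm_le_norm_add_self y
    _ = 1 * ‖x‖ := by rw [hy, one_mul]

theorem l2_opNorm_inv_sub_inv_le {A B : Matrix ι ι 𝕜} (h : IsUnit A ↔ IsUnit B) :
    ‖A⁻¹ - B⁻¹‖ ≤ ‖A⁻¹‖ * ‖A - B‖ * ‖B⁻¹‖ := by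
  simpa only [nonsing_inv_eq_ringInverse] using Ring.norm_inverse_sub_inverse_le h

end Matrix

/-- **Linear stability of the low-pass filter `g(λ) = (1 + αλ)⁻¹`.**
If `L` and `Lp` are real symmetric positive semidefinite `n × n` matrices and `α > 0`,
then `I + αL` and `I + αLp` are invertible and
`‖(I + αL)⁻¹ - (I + αLp)⁻¹‖₂ ≤ α * ‖L - Lp‖₂`. -/
theorem lowpass_filter_linearly_stable {n : ℕ}
    (L Lp : Matrix (Fin n) (Fin n) ℝ)
    (hL : L.PosSemidef) (hLp : Lp.PosSemidef)
    (α : ℝ) (hα : 0 < α) :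
    IsUnit (1 + α • L) ∧ IsUnit (1 + α • Lp) ∧
      ‖(1 + α • L)⁻¹ - (1 + α • Lp)⁻¹‖ ≤ α * ‖L - Lp‖ := by
  have hαL := hL.smul hα.le
  have hαLp := hLp.smul hα.le
  refine ⟨hαL.isUnit_one_add, hαLp.isUnit_one_add, ?_⟩
  calc ‖(1 + α • L)⁻¹ - (1 + α • Lp)⁻¹‖
      ≤ ‖(1 + α • L)⁻¹‖ * ‖(1 + α • L) - (1 + α • Lp)‖ * ‖(1 + α • Lp)⁻¹‖ :=
        Matrix.l2_opNorm_inv_sub_inv_le (by simp [hαL.isUnit_one_add, hαLp.isUnit_one_add])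
    _ ≤ 1 * ‖α • (L - Lp)‖ * 1 := by
        rw [add_sub_add_left_eq_sub, ← smul_sub]
        gcongr
        exacts [hαL.l2_opNorm_inv_one_add_le_one, hαLp.l2_opNorm_inv_one_add_le_one]
    _ = α * ‖L - Lp‖ := by rw [one_mul, mul_one, norm_smul, Real.norm_of_nonneg hα.le]
end

section
/- Let G and G_p be simple graphs on a common finite vertex set, neither having isolated vertices, and let u be a vertex with α_u ∈ [0,1). Then ∑_{v ∈ R_u} |1/√(d_u d_v) − 1/√(d_u' d_v')| ≤ (α_u/(1−α_u)) · ∑_{v ∈ R_u} 1/√(d_u d_v) ≤ (α_u/(1−α_u)) · (d_u − Δ_u⁻)/√(d_u δ_u). -/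
/-!
Every degree at `u` or at a neighbour of `u` changes by a factor in `[1 - α_u, 1 + α_u]`, so
`√(d_u' d_v')` lies within relative distance `α_u` of `√(d_u d_v)`, and
`|1/s - 1/t| = |t - s| / (s t) ≤ α_u s / (s · (1 - α_u) s)`. Summing over `R_u` gives the first
bound; the second bounds each `d_v` below by `δ_u` and counts `|R_u| = d_u - Δ_u⁻`.
-/

/-- `α_u`: the maximum relative change in degree among the vertex `u` and its
neighbours in `G`, i.e. `max_{v ∈ N_G(u) ∪ {u}} |d_v' - d_v| / d_v`. -/
noncomputable def alphaU {V : Type*} [Fintype V] [DecidableEq V]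
    (G Gp : SimpleGraph V) [DecidableRel G.Adj] [DecidableRel Gp.Adj] (u : V) : ℝ :=
  (insert u (G.neighborFinset u)).sup' (Finset.insert_nonempty _ _)
    (fun v => |(Gp.degree v : ℝ) - (G.degree v : ℝ)| / (G.degree v : ℝ))

open Finset

lemma abs_sqrt_mul_sub_sqrt_mul_le {a x y x' y' : ℝ} (ha0 : 0 ≤ a) (ha1 : a ≤ 1)
    (hx : 0 ≤ x) (hy : 0 ≤ y) (hxx' : |x' - x| ≤ a * x) (hyy' : |y' - y| ≤ a * y) :
    |√(x' * y') - √(x * y)| ≤ a * √(x * y) := by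
  obtain ⟨hx₁, hx₂⟩ := abs_sub_le_iff.mp hxx'
  obtain ⟨hy₁, hy₂⟩ := abs_sub_le_iff.mp hyy'
  have sqrt_scale : ∀ c : ℝ, 0 ≤ c → √(c ^ 2 * (x * y)) = c * √(x * y) := fun c hc => by
    rw [Real.sqrt_mul (sq_nonneg c), Real.sqrt_sq hc]
  have upper : √(x' * y') ≤ (1 + a) * √(x * y) := by
    rw [← sqrt_scale _ (by linarith)]
    refine Real.sqrt_le_sqrt ?_
    have := mul_le_mul (a := x') (b := (1 + a) * x) (c := y') (d := (1 + a) * y)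
      (by linarith) (by linarith) (by nlinarith) (by positivity)
    linarith
  have lower : (1 - a) * √(x * y) ≤ √(x' * y') := by
    rw [← sqrt_scale _ (by linarith)]
    refine Real.sqrt_le_sqrt ?_
    have := mul_le_mul (a := (1 - a) * x) (b := x') (c := (1 - a) * y) (d := y')
      (by linarith) (by linarith) (by nlinarith) (by nlinarith)
    linarith
  rw [abs_sub_le_iff]
  constructor <;> linarith

lemma abs_one_div_sub_one_div_le {a s t : ℝ} (ha1 : a < 1) (hs : 0 < s)
    (hts : |t - s| ≤ a * s) : |1 / s - 1 / t| ≤ a / (1 - a) * (1 / s) := by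
  have hst : (1 - a) * s ≤ t := by linarith [neg_abs_le (t - s)]
  have ht : 0 < t := lt_of_lt_of_le (by nlinarith) hst
  calc |1 / s - 1 / t| = |t - s| / (s * t) := by
        rw [div_sub_div _ _ hs.ne' ht.ne', abs_div, abs_of_pos (mul_pos hs ht)]
        ring_nf
    _ ≤ a * s / (s * ((1 - a) * s)) := by
        gcongr
        exact (abs_nonneg _).trans hts
    _ = a / (1 - a) * (1 / s) := by
        field_simp

lemma sum_one_div_sqrt_mul_le {ι : Type*} (s : Finset ι) {c m : ℝ} {f : ι → ℝ}
    (hc : 0 < c) (hm : 0 < m) (hf : ∀ i ∈ s, m ≤ f i) :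
    ∑ i ∈ s, 1 / √(c * f i) ≤ #s / √(c * m) := by
  calc ∑ i ∈ s, 1 / √(c * f i) ≤ ∑ _i ∈ s, 1 / √(c * m) := by
        refine sum_le_sum fun i hi => one_div_le_one_div_of_le (by positivity) ?_
        exact Real.sqrt_le_sqrt (mul_le_mul_of_nonneg_left (hf i hi) hc.le)
    _ = #s / √(c * m) := by
        rw [sum_const, nsmul_eq_mul, mul_one_div]

namespace SimpleGraph

variable {V : Type*} [Fintype V] (G Gp : SimpleGraph V) [DecidableRel G.Adj]
  [DecidableRel Gp.Adj]

lemma abs_degree_sub_le_alphaU_mul [DecidableEq V] {u v : V}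
    (hv : v ∈ insert u (G.neighborFinset u)) (hdeg : 0 < G.degree v) :
    |(Gp.degree v : ℝ) - G.degree v| ≤ alphaU G Gp u * G.degree v := by
  rw [← div_le_iff₀ (by exact_mod_cast hdeg)]
  exact le_sup' (fun v => |(Gp.degree v : ℝ) - G.degree v| / G.degree v) hv

lemma card_filter_adj_and_adj_add_card_filter_adj_and_not_adj (u : V) :
    #{v | G.Adj u v ∧ Gp.Adj u v} + #{v | G.Adj u v ∧ ¬ Gp.Adj u v} = G.degree u := by
  rw [← card_neighborFinset_eq_degree, neighborFinset_eq_filter, ← filter_filter,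
    ← filter_filter, card_filter_add_card_filter_not]

end SimpleGraph

theorem remaining_edges_term_bound_general {V : Type*} [Fintype V] [DecidableEq V]
    (G Gp : SimpleGraph V) [DecidableRel G.Adj] [DecidableRel Gp.Adj]
    (hG : ∀ v, (G.neighborFinset v).Nonempty)
    (u : V) (hα : alphaU G Gp u ∈ Set.Ico (0 : ℝ) 1) :
    (∑ v ∈ Finset.univ.filter (fun v => G.Adj u v ∧ Gp.Adj u v),
        |1 / Real.sqrt ((G.degree u : ℝ) * (G.degree v : ℝ)) -
          1 / Real.sqrt ((Gp.degree u : ℝ) * (Gp.degree v : ℝ))| ≤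
      (alphaU G Gp u / (1 - alphaU G Gp u)) *
        ∑ v ∈ Finset.univ.filter (fun v => G.Adj u v ∧ Gp.Adj u v),
          1 / Real.sqrt ((G.degree u : ℝ) * (G.degree v : ℝ))) ∧
    ((alphaU G Gp u / (1 - alphaU G Gp u)) *
        ∑ v ∈ Finset.univ.filter (fun v => G.Adj u v ∧ Gp.Adj u v),
          1 / Real.sqrt ((G.degree u : ℝ) * (G.degree v : ℝ)) ≤
      (alphaU G Gp u / (1 - alphaU G Gp u)) *
        (((G.degree u : ℝ) -
            ((Finset.univ.filter (fun v => G.Adj u v ∧ ¬ Gp.Adj u v)).card : ℝ)) /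
          Real.sqrt ((G.degree u : ℝ) *
            (G.neighborFinset u).inf' (hG u) (fun v => (G.degree v : ℝ))))) := by
  obtain ⟨ha0, ha1⟩ := hα
  have hdeg : ∀ v, 0 < G.degree v := fun v => card_pos.mpr (hG v)
  have hdegR : ∀ v, (0 : ℝ) < G.degree v := fun v => by exact_mod_cast hdeg v
  have hrel : ∀ v ∈ insert u (G.neighborFinset u),
      |(Gp.degree v : ℝ) - G.degree v| ≤ alphaU G Gp u * G.degree v :=
    fun v hv => G.abs_degree_sub_le_alphaU_mul Gp hv (hdeg v)
  refine ⟨?_, mul_le_mul_of_nonneg_left ?_ (div_nonneg ha0 (by linarith))⟩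
  · rw [mul_sum]
    refine sum_le_sum fun v hv => abs_one_div_sub_one_div_le ha1
      (Real.sqrt_pos.mpr (mul_pos (hdegR u) (hdegR v))) ?_
    have hadj : G.Adj u v := (mem_filter.mp hv).2.1
    exact abs_sqrt_mul_sub_sqrt_mul_le ha0 ha1.le (by positivity) (by positivity)
      (hrel u (mem_insert_self u _))
      (hrel v (mem_insert_of_mem ((G.mem_neighborFinset u v).mpr hadj)))
  · have hcard : (#{v | G.Adj u v ∧ Gp.Adj u v} : ℝ) =
        G.degree u - #{v | G.Adj u v ∧ ¬ Gp.Adj u v} := by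
      rw [← G.card_filter_adj_and_adj_add_card_filter_adj_and_not_adj Gp u]
      push_cast
      ring
    rw [← hcard]
    refine sum_one_div_sqrt_mul_le _ (hdegR u) ((lt_inf'_iff _).mpr fun v _ => hdegR v)
      fun v hv => inf'_le _ ?_
    exact (G.mem_neighborFinset u v).mpr (mem_filter.mp hv).2.1

/-- **Lemma 1** of the paper: for `α_u ∈ [0,1)`,
`∑_{v ∈ R_u} |1/√(d_u d_v) - 1/√(d_u' d_v')| ≤ (α_u/(1-α_u)) ∑_{v ∈ R_u} 1/√(d_u d_v)
  ≤ (α_u/(1-α_u)) (d_u - Δ_u⁻)/√(d_u δ_u)`. -/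
theorem remaining_edges_term_bound {V : Type*} [Fintype V] [DecidableEq V]
    (G Gp : SimpleGraph V) [DecidableRel G.Adj] [DecidableRel Gp.Adj]
    (hG : ∀ v, (G.neighborFinset v).Nonempty)
    (hGp : ∀ v, (Gp.neighborFinset v).Nonempty)
    (u : V) (hα : alphaU G Gp u ∈ Set.Ico (0 : ℝ) 1) :
    (∑ v ∈ Finset.univ.filter (fun v => G.Adj u v ∧ Gp.Adj u v),
        |1 / Real.sqrt ((G.degree u : ℝ) * (G.degree v : ℝ)) -
          1 / Real.sqrt ((Gp.degree u : ℝ) * (Gp.degree v : ℝ))| ≤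
      (alphaU G Gp u / (1 - alphaU G Gp u)) *
        ∑ v ∈ Finset.univ.filter (fun v => G.Adj u v ∧ Gp.Adj u v),
          1 / Real.sqrt ((G.degree u : ℝ) * (G.degree v : ℝ))) ∧
    ((alphaU G Gp u / (1 - alphaU G Gp u)) *
        ∑ v ∈ Finset.univ.filter (fun v => G.Adj u v ∧ Gp.Adj u v),
          1 / Real.sqrt ((G.degree u : ℝ) * (G.degree v : ℝ)) ≤
      (alphaU G Gp u / (1 - alphaU G Gp u)) *
        (((G.degree u : ℝ) -
            ((Finset.univ.filter (fun v => G.Adj u v ∧ ¬ Gp.Adj u v)).card : ℝ)) /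
          Real.sqrt ((G.degree u : ℝ) *
            (G.neighborFinset u).inf' (hG u) (fun v => (G.degree v : ℝ))))) :=
  remaining_edges_term_bound_general G Gp hG u hα
end

section
/- Let G and G_p be simple graphs on a common finite vertex set, neither having isolated vertices, with normalized Laplacians L and L_p and error matrix E = L_p − L. Suppose the perturbation preserves all degrees, i.e. d_u' = d_u for every vertex u (so that α_u = 0 and Δ_u⁻ = Δ_u⁺ for every u); write r_u = Δ_u⁻ = Δ_u⁺ for the number of rewiring operations around u, and let δ̂_u be the smallest degree among the vertices adjacent to u in G or in G_p. Then ‖E‖₂ ≤ max_{u ∈ V} 2 r_u/√(d_u δ̂_u). -/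
/-!
Degree preservation makes the entries of `E` at a common edge of `G` and `G_p` cancel, so row `u`
of `E` is supported on the symmetric difference of the two neighbourhoods of `u`, which has
`2 r_u` elements; each such entry is `±1 / √(d_u d_v) ≤ 1 / √(d_u δ̂_u)` in absolute value.
The Schur test `‖A‖₂ ≤ √(max row sum · max column sum)` of the absolute entries, together with
the symmetry of `E`, turns this row bound into the operator-norm bound.
-/

open scoped Matrix.Norms.L2Operator

noncomputable def normLap {V : Type*} [Fintype V] [DecidableEq V]
    (G : SimpleGraph V) [DecidableRel G.Adj] : Matrix V V ℝ :=
  fun u v =>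
    if u = v then 1
    else if G.Adj u v then -(1 / Real.sqrt ((G.degree u : ℝ) * (G.degree v : ℝ)))
    else 0

open Finset

theorem norm_sum_mul_sq_le {ι 𝕜 : Type*} [SeminormedRing 𝕜] (s : Finset ι) (a y : ι → 𝕜) :
    ‖∑ j ∈ s, a j * y j‖ ^ 2 ≤ (∑ j ∈ s, ‖a j‖) * ∑ j ∈ s, ‖a j‖ * ‖y j‖ ^ 2 :=
  calc ‖∑ j ∈ s, a j * y j‖ ^ 2 ≤ (∑ j ∈ s, ‖a j‖ * ‖y j‖) ^ 2 := by
        gcongr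
        exact norm_sum_le_of_le s fun j _ => norm_mul_le _ _
    _ ≤ _ := sum_sq_le_sum_mul_sum_of_sq_le_mul s (fun _ _ => norm_nonneg _)
        (fun _ _ => by positivity) fun _ _ => le_of_eq (by ring)

theorem Matrix.l2_opNorm_le_sqrt_mul {𝕜 m n : Type*} [RCLike 𝕜] [Fintype m] [Fintype n]
    [DecidableEq n] (A : Matrix m n 𝕜) {r c : ℝ} (hr : 0 ≤ r)
    (hrow : ∀ i, ∑ j, ‖A i j‖ ≤ r) (hcol : ∀ j, ∑ i, ‖A i j‖ ≤ c) : ‖A‖ ≤ √(r * c) := by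
  rw [l2_opNorm_def]
  refine ContinuousLinearMap.opNorm_le_bound _ (Real.sqrt_nonneg _) fun x => ?_
  set T := (toEuclideanLin (𝕜 := 𝕜) (m := m) (n := n)).trans LinearMap.toContinuousLinearMap A
  have hT : ‖T x‖ ^ 2 ≤ r * c * ‖x‖ ^ 2 := by
    rw [EuclideanSpace.norm_sq_eq, EuclideanSpace.norm_sq_eq]
    calc ∑ i, ‖(T x) i‖ ^ 2 = ∑ i, ‖∑ j, A i j * x j‖ ^ 2 := rfl
      _ ≤ ∑ i, (∑ j, ‖A i j‖) * ∑ j, ‖A i j‖ * ‖x j‖ ^ 2 :=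
          sum_le_sum fun i _ => norm_sum_mul_sq_le _ _ _
      _ ≤ ∑ i, r * ∑ j, ‖A i j‖ * ‖x j‖ ^ 2 := by gcongr with i; exact hrow i
      _ = r * ∑ j, (∑ i, ‖A i j‖) * ‖x j‖ ^ 2 := by
          rw [← mul_sum, sum_comm]; simp_rw [sum_mul]
      _ ≤ r * ∑ j, c * ‖x j‖ ^ 2 := by gcongr with j; exact hcol j
      _ = r * c * ∑ j, ‖x j‖ ^ 2 := by rw [← mul_sum, mul_assoc]
  calc ‖T x‖ = √(‖T x‖ ^ 2) := (Real.sqrt_sq (norm_nonneg _)).symm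
    _ ≤ √(r * c * ‖x‖ ^ 2) := Real.sqrt_le_sqrt hT
    _ = √(r * c) * ‖x‖ := by rw [Real.sqrt_mul' _ (sq_nonneg _), Real.sqrt_sq (norm_nonneg _)]

theorem Matrix.IsSymm.l2_opNorm_le {𝕜 n : Type*} [RCLike 𝕜] [Fintype n] [DecidableEq n]
    {A : Matrix n n 𝕜} (hA : A.IsSymm) {c : ℝ} (hc : 0 ≤ c) (hrow : ∀ i, ∑ j, ‖A i j‖ ≤ c) :
    ‖A‖ ≤ c := by
  have hcol (j : n) : ∑ i, ‖A i j‖ ≤ c :=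
    (sum_congr rfl fun i _ => by rw [hA.apply]).trans_le (hrow j)
  simpa only [Real.sqrt_mul_self hc] using A.l2_opNorm_le_sqrt_mul hc hrow hcol

theorem Finset.card_symmDiff_eq_two_mul_card_sdiff {α : Type*} [DecidableEq α] {s t : Finset α}
    (h : #s = #t) : #(symmDiff s t) = 2 * #(s \ t) := by
  rw [symmDiff_def, sup_eq_union, card_union_of_disjoint disjoint_sdiff_sdiff,
    ← card_sdiff_comm h, two_mul]

section NormLap

variable {V : Type*} [Fintype V] [DecidableEq V]

theorem isSymm_normLap (G : SimpleGraph V) [DecidableRel G.Adj] : (normLap G).IsSymm :=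
  Matrix.IsSymm.ext fun u v => by
    by_cases huv : u = v
    · rw [huv]
    · simp only [normLap, huv, Ne.symm huv, if_false, G.adj_comm, mul_comm]

variable {G Gp : SimpleGraph V} [DecidableRel G.Adj] [DecidableRel Gp.Adj]

theorem norm_normLap_sub_apply (hdeg : ∀ v, Gp.degree v = G.degree v) (u v : V) :
    ‖(normLap Gp - normLap G) u v‖ =
      if v ∈ symmDiff (G.neighborFinset u) (Gp.neighborFinset u) then
        1 / √((G.degree u : ℝ) * G.degree v)
      else 0 := by
  by_cases huv : u = v
  · subst huv; simp [normLap, mem_symmDiff]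
  · have hw : 0 ≤ 1 / √((G.degree u : ℝ) * G.degree v) := by positivity
    by_cases hG : G.Adj u v <;> by_cases hGp : Gp.Adj u v <;>
      simp only [Matrix.sub_apply, normLap, huv, hG, hGp, hdeg, mem_symmDiff,
        SimpleGraph.mem_neighborFinset, if_false, if_true, sub_self, sub_zero, zero_sub, norm_neg,
        norm_zero, Real.norm_of_nonneg hw, not_true, not_false_iff, and_true, and_false, or_false,
        false_or]

theorem sum_norm_normLap_sub_apply_le (hdeg : ∀ v, Gp.degree v = G.degree v) (u : V) {δ : ℝ}
    (hδ : 0 < δ) (hδle : ∀ v ∈ G.neighborFinset u ∪ Gp.neighborFinset u, δ ≤ G.degree v) :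
    ∑ v, ‖(normLap Gp - normLap G) u v‖ ≤
      #(symmDiff (G.neighborFinset u) (Gp.neighborFinset u)) / √(G.degree u * δ) := by
  set S := symmDiff (G.neighborFinset u) (Gp.neighborFinset u)
  calc ∑ v, ‖(normLap Gp - normLap G) u v‖ = ∑ v ∈ S, 1 / √((G.degree u : ℝ) * G.degree v) := by
        simp only [norm_normLap_sub_apply hdeg, sum_ite_mem, univ_inter, S]
    _ ≤ #S • (1 / √(G.degree u * δ)) := by
        refine sum_le_card_nsmul _ _ _ fun v hv => ?_
        rcases (Nat.cast_nonneg (α := ℝ) (G.degree u)).eq_or_lt with hu | hu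
        · simp [← hu]
        · gcongr
          exact hδle v (symmDiff_subset_union hv)
    _ = #S / √(G.degree u * δ) := by rw [nsmul_eq_mul, mul_one_div]

end NormLap

theorem error_matrix_l2_opNorm_bound_of_rewiring_general {V : Type*} [Fintype V] [DecidableEq V]
    [Nonempty V]
    (G Gp : SimpleGraph V) [DecidableRel G.Adj] [DecidableRel Gp.Adj]
    (hG : ∀ v, (G.neighborFinset v).Nonempty)
    (hdeg : ∀ v, Gp.degree v = G.degree v) :
    ‖normLap Gp - normLap G‖ ≤
      Finset.univ.sup' Finset.univ_nonempty (fun u =>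
        2 * ((Finset.univ.filter (fun v => G.Adj u v ∧ ¬ Gp.Adj u v)).card : ℝ) /
          Real.sqrt ((G.degree u : ℝ) *
            ((G.neighborFinset u ∪ Gp.neighborFinset u).inf'
              ((hG u).mono Finset.subset_union_left)
              (fun v => (G.degree v : ℝ))))) := by
  set δ := fun u => (G.neighborFinset u ∪ Gp.neighborFinset u).inf'
    ((hG u).mono Finset.subset_union_left) (fun v => (G.degree v : ℝ))
  set f := fun u => 2 * ((Finset.univ.filter (fun v => G.Adj u v ∧ ¬ Gp.Adj u v)).card : ℝ) /
    Real.sqrt ((G.degree u : ℝ) * δ u)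
  have hrow (u : V) : ∑ v, ‖(normLap Gp - normLap G) u v‖ ≤ f u := by
    have hδ : 0 < δ u := (lt_inf'_iff _).2 fun v _ => by simpa using (hG v).card_pos
    refine (sum_norm_normLap_sub_apply_le hdeg u hδ fun v hv => inf'_le _ hv).trans_eq ?_
    rw [card_symmDiff_eq_two_mul_card_sdiff (by simp [hdeg]), ← SimpleGraph.neighborFinset_sdiff,
      SimpleGraph.neighborFinset_eq_filter]
    simp [f]
  obtain ⟨u₀⟩ := ‹Nonempty V›
  exact ((isSymm_normLap Gp).sub (isSymm_normLap G)).l2_opNorm_le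
    (le_sup'_of_le f (mem_univ u₀) (by positivity)) fun u => (hrow u).trans (le_sup' f (mem_univ u))

/-- **Corollary (degree-preserving edge rewiring)**: if the perturbation preserves all
degrees (`d_u' = d_u` for every `u`), then `‖E‖₂ ≤ max_u 2 r_u / √(d_u δ̂_u)`, where
`r_u = Δ_u⁻ = Δ_u⁺` is the number of rewiring operations around `u` and `δ̂_u` is the
smallest degree among the vertices adjacent to `u` in `G` or in `G_p`. -/
theorem error_matrix_l2_opNorm_bound_of_rewiring {V : Type*} [Fintype V] [DecidableEq V]
    [Nonempty V]
    (G Gp : SimpleGraph V) [DecidableRel G.Adj] [DecidableRel Gp.Adj]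
    (hG : ∀ v, (G.neighborFinset v).Nonempty)
    (hGp : ∀ v, (Gp.neighborFinset v).Nonempty)
    (hdeg : ∀ v, Gp.degree v = G.degree v) :
    ‖normLap Gp - normLap G‖ ≤
      Finset.univ.sup' Finset.univ_nonempty (fun u =>
        2 * ((Finset.univ.filter (fun v => G.Adj u v ∧ ¬ Gp.Adj u v)).card : ℝ) /
          Real.sqrt ((G.degree u : ℝ) *
            ((G.neighborFinset u ∪ Gp.neighborFinset u).inf'
              ((hG u).mono Finset.subset_union_left)
              (fun v => (G.degree v : ℝ))))) :=
  error_matrix_l2_opNorm_bound_of_rewiring_general G Gp hG hdeg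
end
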